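/- Let θ, θ^W > 0 and define J_s(x) = (1/s!) θ^{(s+1)/2} ∫_{−∞}^{+∞} (2π θ^W)^{−1/2} exp(−|√θ y − x|²/(2θ^W)) He_s(y) dy for s ≥ 0, with the convention J_{−1} ≡ 0. Then J_0(x) = 1 for all x ∈ ℝ, and for every integer s ≥ 1 and all x ∈ ℝ, J_s(x) = (1/s)[(θ^W − θ) J_{s−2}(x) + x J_{s−1}(x)]. -/

import Mathlib

/-! With `μ = x/√θ` and `v = θ^W/θ`, the substitution in the defining integral gives
`J_s(x) = θ^{s/2} E[He_s(Y)] / s!` for `Y ~ N(μ, v)`. Stein's identity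
`E[(Y - μ) f(Y)] = v E[f'(Y)]` for `f = He_n`, combined with `y He_n = He_{n+1} + n He_{n-1}` and
`He_n' = n He_{n-1}`, yields `E He_{n+1} = μ E He_n + n (v - 1) E He_{n-1}`; rescaling by
`θ^{(n+1)/2} / n!` turns this into the recursion, and `J_0 = 1` because `N(μ, v)` is a
probability measure. -/

open MeasureTheory Real

/-- Probabilists' Hermite polynomial `He n x`, with the convention `He n ≡ 0` for `n < 0`. -/
noncomputable def He (n : ℤ) (x : ℝ) : ℝ :=
  if n < 0 then 0 else Polynomial.aeval x (Polynomial.hermite n.toNat)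

/-- `J_s(x) = (1/s!) θ^{(s+1)/2} ∫_ℝ (2πθ^W)^{−1/2} exp(−|√θ y − x|²/(2θ^W)) He_s(y) dy`
for `s ≥ 0`, with the convention `J_s ≡ 0` for `s < 0`. -/
noncomputable def J (θ θW : ℝ) (s : ℤ) (x : ℝ) : ℝ :=
  if s < 0 then 0 else
    (1 / (Nat.factorial s.toNat)) * θ ^ (((s : ℝ) + 1) / 2) *
      ∫ y : ℝ, (2 * Real.pi * θW) ^ (-(1 : ℝ) / 2) *
        Real.exp (-(Real.sqrt θ * y - x) ^ 2 / (2 * θW)) * He s y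

namespace Polynomial

theorem derivative_hermite_succ (n : ℕ) :
    derivative (hermite (n + 1)) = (n + 1 : ℤ[X]) * hermite n := by
  induction n with
  | zero => simp [hermite_zero]
  | succ n ih =>
    rw [hermite_succ (n + 1), derivative_sub, derivative_mul, derivative_X, one_mul, ih,
      derivative_mul]
    simp only [derivative_add, derivative_natCast, derivative_one, add_zero, zero_mul, zero_add]
    push_cast
    linear_combination -(↑n + 1 : ℤ[X]) * hermite_succ n

end Polynomial

open Polynomial

theorem He_natCast (n : ℕ) : He n = fun y => aeval y (hermite n) := by
  ext y; simp [He]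

theorem He_of_neg {s : ℤ} (hs : s < 0) : He s = 0 := by
  ext y; simp [He, hs]

theorem He_zero : He 0 = fun _ => 1 := by
  ext y; simp [He]

theorem hasDerivAt_He (n : ℕ) (y : ℝ) : HasDerivAt (He n) (n * He (n - 1) y) y := by
  cases n with
  | zero => simpa [He_zero] using hasDerivAt_const y (1 : ℝ)
  | succ m =>
    have h := (hermite (m + 1)).hasDerivAt_aeval y
    rw [derivative_hermite_succ] at h
    rw [He_natCast, show ((m + 1 : ℕ) : ℤ) - 1 = m by push_cast; ring, He_natCast]
    simpa using h

theorem mul_He (n : ℕ) (y : ℝ) : y * He n y = He (n + 1) y + n * He (n - 1) y := by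
  cases n with
  | zero => simp [He]
  | succ m =>
    have h := congrArg (aeval y) (hermite_succ (m + 1))
    simp only [map_sub, map_mul, map_add, map_natCast, map_one, aeval_X,
      derivative_hermite_succ] at h
    rw [show ((m + 1 : ℕ) : ℤ) + 1 = ((m + 1 + 1 : ℕ) : ℤ) by push_cast; ring,
      show ((m + 1 : ℕ) : ℤ) - 1 = m by push_cast; ring, He_natCast, He_natCast, He_natCast]
    push_cast
    linear_combination -h

namespace ProbabilityTheory

open scoped NNReal

variable {μ : ℝ} {v : ℝ≥0}

theorem integrable_gaussianReal_iff (hv : v ≠ 0) {f : ℝ → ℝ} :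
    Integrable f (gaussianReal μ v) ↔ Integrable (fun y => gaussianPDFReal μ v y * f y) := by
  rw [gaussianReal_of_var_ne_zero _ hv, integrable_withDensity_iff_integrable_smul'
    (measurable_gaussianPDF μ v) (ae_of_all _ fun _ => gaussianPDF_lt_top)]
  simp_rw [toReal_gaussianPDF, smul_eq_mul]

theorem hasDerivAt_gaussianPDFReal (y : ℝ) :
    HasDerivAt (gaussianPDFReal μ v) (-((y - μ) / v) * gaussianPDFReal μ v y) y := by
  have h : HasDerivAt (fun y => -(y - μ) ^ 2 / (2 * v)) (-((y - μ) / v)) y :=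
    ((((hasDerivAt_id' y).sub_const μ).pow 2).neg.div_const _).congr_deriv (by ring)
  exact (h.exp.const_mul _).congr_deriv (by rw [gaussianPDFReal]; ring)

/-- Stein's lemma: Gaussian integration by parts. -/
theorem integral_sub_mul_gaussianReal {f f' : ℝ → ℝ} (hf : ∀ y, HasDerivAt f (f' y) y)
    (hf_int : Integrable f (gaussianReal μ v)) (hf'_int : Integrable f' (gaussianReal μ v))
    (hmul_int : Integrable (fun y => (y - μ) * f y) (gaussianReal μ v)) :
    ∫ y, (y - μ) * f y ∂gaussianReal μ v = v * ∫ y, f' y ∂gaussianReal μ v := by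
  rcases eq_or_ne v 0 with rfl | hv
  · simp [gaussianReal_zero_var]
  have hderiv (y : ℝ) : HasDerivAt (fun y => gaussianPDFReal μ v y * f y)
      (gaussianPDFReal μ v y * f' y - (v : ℝ)⁻¹ * (gaussianPDFReal μ v y * ((y - μ) * f y))) y :=
    ((hasDerivAt_gaussianPDFReal y).mul (hf y)).congr_deriv (by ring)
  have h1 := (integrable_gaussianReal_iff hv).1 hf'_int
  have h2 := ((integrable_gaussianReal_iff hv).1 hmul_int).const_mul (v : ℝ)⁻¹
  have hzero := integral_eq_zero_of_hasDerivAt_of_integrable hderiv (h1.sub h2)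
    ((integrable_gaussianReal_iff hv).1 hf_int)
  rw [integral_sub h1 h2, integral_const_mul, sub_eq_zero] at hzero
  simp only [integral_gaussianReal_eq_integral_smul hv, smul_eq_mul]
  have hv' : (v : ℝ) ≠ 0 := by exact_mod_cast hv
  rw [hzero]
  field_simp

theorem integrable_aeval_gaussianReal {R : Type*} [CommSemiring R] [Algebra R ℝ] (p : R[X]) :
    Integrable (fun y => aeval y p) (gaussianReal μ v) := by
  induction p using Polynomial.induction_on' with
  | add p q hp hq => simp only [map_add]; exact hp.add hq
  | monomial n a =>
    have h := integrable_pow_of_mem_interior_integrableExpSet (X := fun y => y)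
      (μ := gaussianReal μ v) (by simp [integrableExpSet_fun_id_gaussianReal]) n
    simpa using h.const_mul (algebraMap R ℝ a)

end ProbabilityTheory

open ProbabilityTheory
open scoped NNReal Nat

section HermiteGaussian

variable {μ : ℝ} {v : ℝ≥0}

theorem integrable_He (s : ℤ) : Integrable (He s) (gaussianReal μ v) := by
  rcases lt_or_ge s 0 with hs | hs
  · rw [He_of_neg hs]
    exact integrable_zero _ _ _
  · obtain ⟨n, rfl⟩ := Int.eq_ofNat_of_zero_le hs
    rw [He_natCast]
    exact integrable_aeval_gaussianReal _

theorem integral_He_succ_gaussianReal (n : ℕ) :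
    ∫ y, He (n + 1) y ∂gaussianReal μ v =
      μ * ∫ y, He n y ∂gaussianReal μ v + n * (v - 1) * ∫ y, He (n - 1) y ∂gaussianReal μ v := by
  have hmul : (fun y => (y - μ) * He n y) =
      fun y => He (n + 1) y + n * He (n - 1) y - μ * He n y :=
    funext fun y => by rw [sub_mul, mul_He]
  have hint : Integrable (fun y => He (n + 1) y + n * He (n - 1) y) (gaussianReal μ v) :=
    (integrable_He _).add ((integrable_He _).const_mul _)
  have hstein := integral_sub_mul_gaussianReal (hasDerivAt_He n) (integrable_He n)
    ((integrable_He _).const_mul _) (by rw [hmul]; exact hint.sub ((integrable_He _).const_mul _))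
  rw [hmul, integral_sub hint ((integrable_He _).const_mul _),
    integral_add (integrable_He _) ((integrable_He _).const_mul _), integral_const_mul,
    integral_const_mul] at hstein
  linear_combination hstein

end HermiteGaussian

noncomputable def hermiteMoment (μ : ℝ) (v : ℝ≥0) (s : ℤ) : ℝ :=
  (∫ y, He s y ∂gaussianReal μ v) / s.toNat !

theorem hermiteMoment_zero (μ : ℝ) (v : ℝ≥0) : hermiteMoment μ v 0 = 1 := by
  simp [hermiteMoment, He_zero]

theorem mul_hermiteMoment (μ : ℝ) (v : ℝ≥0) {s : ℤ} (hs : 1 ≤ s) :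
    s * hermiteMoment μ v s =
      μ * hermiteMoment μ v (s - 1) + (v - 1) * hermiteMoment μ v (s - 2) := by
  obtain ⟨n, rfl⟩ : ∃ n : ℕ, s = n + 1 := ⟨(s - 1).toNat, by omega⟩
  rw [add_sub_cancel_right, show (n : ℤ) + 1 - 2 = n - 1 by ring]
  simp only [hermiteMoment, integral_He_succ_gaussianReal]
  cases n with
  | zero => simp [He_of_neg]
  | succ m =>
    rw [show ((m + 1 : ℕ) : ℤ) + 1 = ((m + 2 : ℕ) : ℤ) by push_cast; ring,
      show ((m + 1 : ℕ) : ℤ) - 1 = m by push_cast; ring]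
    simp only [Int.toNat_natCast, Nat.factorial_succ]
    push_cast
    field_simp
    ring

theorem gaussian_kernel_eq_gaussianPDFReal {θ θW : ℝ} (hθ : 0 < θ) (hθW : 0 < θW) (x y : ℝ) :
    (2 * π * θW) ^ (-(1 : ℝ) / 2) * exp (-(√θ * y - x) ^ 2 / (2 * θW)) =
      (√θ)⁻¹ * gaussianPDFReal (x / √θ) (θW / θ).toNNReal y := by
  have hsqrt : 0 < √θ := sqrt_pos.2 hθ
  have h := gaussianPDFReal_mul (μ := x) (v := θW.toNNReal) hsqrt.ne' y
  rw [gaussianPDFReal, Real.coe_toNNReal _ hθW.le] at h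
  rw [show -(1 : ℝ) / 2 = -(1 / 2) by norm_num, rpow_neg (by positivity), ← sqrt_eq_rpow, h,
    abs_of_pos (inv_pos.2 hsqrt)]
  congr 2
  · exact inv_mul_eq_div _ _
  · ext
    simp [sq_sqrt hθ.le, div_eq_inv_mul, hθW.le]
    positivity

theorem J_eq_sqrt_zpow_mul_hermiteMoment {θ θW : ℝ} (hθ : 0 < θ) (hθW : 0 < θW) (s : ℤ) (x : ℝ) :
    J θ θW s x = √θ ^ s * hermiteMoment (x / √θ) (θW / θ).toNNReal s := by
  rcases lt_or_ge s 0 with hs | hs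
  · simp [J, hermiteMoment, hs, He_of_neg hs]
  have hv : (θW / θ).toNNReal ≠ 0 := (Real.toNNReal_pos.2 (by positivity)).ne'
  have hpow : θ ^ (((s : ℝ) + 1) / 2) = √θ ^ s * √θ := by
    rw [sqrt_eq_rpow, ← rpow_intCast, ← rpow_mul hθ.le, ← rpow_add hθ]
    ring_nf
  rw [J, if_neg (not_lt.2 hs), hermiteMoment, integral_gaussianReal_eq_integral_smul hv]
  simp_rw [gaussian_kernel_eq_gaussianPDFReal hθ hθW, mul_assoc, smul_eq_mul]
  rw [integral_const_mul, hpow]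
  field_simp

/-- `J_0(x) = 1`, and for `s ≥ 1`,
`J_s(x) = (1/s)[(θ^W − θ) J_{s−2}(x) + x J_{s−1}(x)]`. -/
theorem J_recursion (θ θW : ℝ) (hθ : 0 < θ) (hθW : 0 < θW) :
    (∀ x : ℝ, J θ θW 0 x = 1) ∧
    (∀ s : ℤ, 1 ≤ s → ∀ x : ℝ,
      J θ θW s x = (1 / (s : ℝ)) *
        ((θW - θ) * J θ θW (s - 2) x + x * J θ θW (s - 1) x)) := by
  have hJ := J_eq_sqrt_zpow_mul_hermiteMoment hθ hθW
  refine ⟨fun x => by rw [hJ, zpow_zero, one_mul, hermiteMoment_zero], fun s hs x => ?_⟩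
  have hrec := mul_hermiteMoment (x / √θ) (θW / θ).toNNReal hs
  rw [Real.coe_toNNReal _ (by positivity)] at hrec
  have hsqrt : √θ ≠ 0 := by positivity
  have hs0 : (s : ℝ) ≠ 0 := by exact_mod_cast (by omega : s ≠ 0)
  have hpow2 : √θ ^ s = √θ ^ (s - 2) * θ := by
    have h := zpow_add₀ hsqrt (s - 2) 2
    rwa [sub_add_cancel, zpow_two, mul_self_sqrt hθ.le] at h
  have hpow1 : √θ ^ (s - 1) = √θ ^ (s - 2) * √θ := by
    rw [← zpow_add_one₀ hsqrt]; ring_nf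
  rw [hJ, hJ, hJ, hpow2, hpow1]
  set m := hermiteMoment (x / √θ) (θW / θ).toNNReal
  field_simp at hrec ⊢
  apply mul_left_cancel₀ hsqrt
  linear_combination hrec - x * m (s - 1) * mul_self_sqrt hθ.le
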